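/- Suppose h ∈ 𝓗. Then the Kullback–Leibler divergence J is differentiable at ϑ₀ with J′(ϑ₀) = A·h, where A = 1 − (λ₀/S)·ln(1 + S/λ₀); moreover A > 0. In particular, ∫_{0}^{1} S·κ·x^{κ−1}·(h·x^κ)/(S·x^κ + λ₀) dx = h·(1 − (λ₀/S)·ln(1 + S/λ₀)). -/

import Mathlib

/-!
Write `p = ψ(t - ϑ)`, `q = ψ(t - ϑ₀)` and `g(y) = y - (λ₀/S) ln(1 + S y/λ₀)`, so that `A = g(1)`.
Since `λ* = ((S + h)/S)(S q + λ₀) - (h/S) λ₀`, the integrand of `J(ϑ) - J(ϑ₀)` splits exactly into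
`h (g(q) - g(p))` plus `(S + h)/S` times the Poisson Kullback–Leibler divergence between the
theoretical intensities at `ϑ` and `ϑ₀`. The first part integrates to `h (Φ(ϑ₀) - Φ(ϑ))` with
`Φ(ϑ) = ∫_{ϑ₀}^τ g(ψ(t - ϑ)) dt`, a shifted integral of a continuous function, so
`Φ'(ϑ₀) = g(ψ(0)) - g(ψ(τ - ϑ₀)) = -g(1)`. The second part is `O(|ϑ - ϑ₀|^{1+κ})`: the divergence
is at most `S²(p - q)²/λ₀`, `ψ` is `κ`-Hölder, and `∫ |p - q| ≤ 2 |ϑ - ϑ₀|` because `ψ` is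
monotone with values in `[0, 1]`. Finally `h g(x^κ)` is an antiderivative of the integrand of the
closed-form integral, and `A > 0` because `ln(1 + x) < x`.
-/

open MeasureTheory Real Set Filter

/-- The cusp signal shape: `ψ(x) = (x/δ)^κ` for `0 < x < δ`, `1` for `x ≥ δ`, `0` for `x ≤ 0`. -/
noncomputable def psi (δ κ : ℝ) (x : ℝ) : ℝ :=
  if δ ≤ x then 1 else if 0 < x then (x / δ) ^ κ else 0

/-- Theoretical intensity `λ(ϑ, t) = S ψ(t − ϑ) + λ₀`. -/
noncomputable def lamT (S lam0 δ κ : ℝ) (ϑ t : ℝ) : ℝ :=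
  S * psi δ κ (t - ϑ) + lam0

/-- Real intensity `λ*(ϑ₀, t) = (S + h) ψ(t − ϑ₀) + λ₀`. -/
noncomputable def lamR (S h lam0 δ κ : ℝ) (ϑ₀ t : ℝ) : ℝ :=
  (S + h) * psi δ κ (t - ϑ₀) + lam0

/-- The Kullback–Leibler divergence `J(ϑ)`. -/
noncomputable def JKL (S h lam0 δ κ τ ϑ₀ : ℝ) (ϑ : ℝ) : ℝ :=
  ∫ t in (min ϑ ϑ₀)..τ,
    (lamT S lam0 δ κ ϑ t / lamR S h lam0 δ κ ϑ₀ t - 1 -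
      Real.log (lamT S lam0 δ κ ϑ t / lamR S h lam0 δ κ ϑ₀ t)) *
      lamR S h lam0 δ κ ϑ₀ t

open Topology

lemma abs_rpow_sub_rpow_le {a b r : ℝ} (ha : 0 ≤ a) (hb : 0 ≤ b) (hr0 : 0 ≤ r) (hr1 : r ≤ 1) :
    |a ^ r - b ^ r| ≤ |a - b| ^ r := by
  wlog hba : b ≤ a generalizing a b
  · rw [abs_sub_comm, abs_sub_comm a b]
    exact this hb ha (le_of_not_ge hba)
  have hsub := rpow_add_le_add_rpow hb (sub_nonneg.2 hba) hr0 hr1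
  rw [add_sub_cancel] at hsub
  rw [abs_of_nonneg (sub_nonneg.2 (rpow_le_rpow hb hba hr0)), abs_of_nonneg (sub_nonneg.2 hba)]
  linarith

lemma hasDerivAt_zero_of_abs_le {f ε : ℝ → ℝ} {x₀ : ℝ} (hε : Tendsto ε (𝓝 x₀) (𝓝 0))
    (hf : ∀ᶠ x in 𝓝 x₀, |f x| ≤ ε x * |x - x₀|) : HasDerivAt f 0 x₀ := by
  have hf₀ : f x₀ = 0 := by simpa using hf.self_of_nhds
  rw [hasDerivAt_iff_isLittleO, Asymptotics.isLittleO_iff]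
  intro c hc
  filter_upwards [hf, hε.eventually_lt_const hc] with x hfx hεx
  rw [hf₀, smul_zero, sub_zero, sub_zero, norm_eq_abs, norm_eq_abs]
  exact hfx.trans (mul_le_mul_of_nonneg_right hεx.le (abs_nonneg _))

lemma hasDerivAt_integral_comp_sub {F : ℝ → ℝ} (hF : Continuous F) (a b x : ℝ) :
    HasDerivAt (fun y => ∫ t in a..b, F (t - y)) (F (a - x) - F (b - x)) x := by
  have hsplit : ∀ y, ∫ t in a..b, F (t - y) =
      (∫ t in (0 : ℝ)..b - y, F t) - ∫ t in (0 : ℝ)..a - y, F t := fun y => by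
    rw [intervalIntegral.integral_comp_sub_right, intervalIntegral.integral_interval_sub_left
      (hF.intervalIntegrable _ _) (hF.intervalIntegrable _ _)]
  have hprim : ∀ c, HasDerivAt (fun y => ∫ t in (0 : ℝ)..c - y, F t) (-F (c - x)) x := fun c => by
    have := (hF.integral_hasStrictDerivAt 0 (c - x)).hasDerivAt.comp x
      ((hasDerivAt_id' x).const_sub c)
    simpa [Function.comp_def] using this
  rw [funext hsplit]
  exact ((hprim b).sub (hprim a)).congr_deriv (by ring)

lemma integral_abs_sub_comp_sub_le {F : ℝ → ℝ} (hF : Continuous F) (hmono : Monotone F)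
    (hF0 : ∀ x, 0 ≤ F x) (hF1 : ∀ x, F x ≤ 1) (a b x y : ℝ) :
    ∫ t in a..b, |F (t - x) - F (t - y)| ≤ 2 * |x - y| := by
  have hI : ∀ c d, IntervalIntegrable F volume c d := hF.intervalIntegrable
  have hpiece : ∀ c d, |∫ t in c..d, F t| ≤ |d - c| := fun c d => by
    have := intervalIntegral.norm_integral_le_of_norm_le_const (a := c) (b := d) (C := 1)
      fun t _ => by rw [Real.norm_of_nonneg (hF0 t)]; exact hF1 t
    rwa [Real.norm_eq_abs, one_mul] at this
  have hshift : |∫ t in a..b, (F (t - x) - F (t - y))| ≤ 2 * |x - y| := by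
    have hIs : ∀ z, IntervalIntegrable (fun t => F (t - z)) volume a b :=
      fun z => (hF.comp (continuous_sub_right z)).intervalIntegrable _ _
    rw [intervalIntegral.integral_sub (hIs x) (hIs y),
      intervalIntegral.integral_comp_sub_right, intervalIntegral.integral_comp_sub_right,
      intervalIntegral.integral_interval_sub_interval_comm (hI _ _) (hI _ _) (hI _ _)]
    calc _ ≤ |∫ t in a - x..a - y, F t| + |∫ t in b - x..b - y, F t| := abs_sub _ _
      _ ≤ |a - y - (a - x)| + |b - y - (b - x)| := add_le_add (hpiece _ _) (hpiece _ _)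
      _ = 2 * |x - y| := by
        rw [sub_sub_sub_cancel_left, sub_sub_sub_cancel_left, abs_sub_comm]
        ring
  rcases le_total x y with hxy | hyx
  · have habs : ∀ t ∈ uIcc a b, |F (t - x) - F (t - y)| = F (t - x) - F (t - y) :=
      fun t _ => abs_of_nonneg (sub_nonneg.2 (hmono (by linarith)))
    rw [intervalIntegral.integral_congr habs]
    exact (le_abs_self _).trans hshift
  · have habs : ∀ t ∈ uIcc a b, |F (t - x) - F (t - y)| = -(F (t - x) - F (t - y)) :=
      fun t _ => abs_of_nonpos (sub_nonpos.2 (hmono (by linarith)))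
    rw [intervalIntegral.integral_congr habs, intervalIntegral.integral_neg]
    exact (neg_le_abs _).trans hshift

section Psi

variable {δ κ : ℝ}

lemma psi_eq_clamp_rpow (hδ : 0 < δ) (hκ : 0 < κ) (x : ℝ) :
    psi δ κ x = (min (max x 0) δ / δ) ^ κ := by
  unfold psi
  rcases le_or_gt δ x with hδx | hxδ
  · rw [if_pos hδx, max_eq_left (hδ.le.trans hδx), min_eq_right hδx, div_self hδ.ne', one_rpow]
  · rw [if_neg (not_le.mpr hxδ)]
    rcases lt_or_ge 0 x with hx | hx
    · rw [if_pos hx, max_eq_left hx.le, min_eq_left hxδ.le]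
    · rw [if_neg (not_lt.mpr hx), max_eq_right hx, min_eq_left hδ.le, zero_div, zero_rpow hκ.ne']

lemma psi_of_nonpos (hδ : 0 < δ) {x : ℝ} (hx : x ≤ 0) : psi δ κ x = 0 := by
  simp [psi, not_le.mpr (hx.trans_lt hδ), not_lt.mpr hx]

lemma psi_of_le {x : ℝ} (hx : δ ≤ x) : psi δ κ x = 1 := if_pos hx

lemma psi_nonneg (hδ : 0 < δ) (hκ : 0 < κ) (x : ℝ) : 0 ≤ psi δ κ x := by
  rw [psi_eq_clamp_rpow hδ hκ]
  positivity

lemma psi_le_one (hδ : 0 < δ) (hκ : 0 < κ) (x : ℝ) : psi δ κ x ≤ 1 := by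
  rw [psi_eq_clamp_rpow hδ hκ]
  exact rpow_le_one (by positivity) ((div_le_one hδ).2 (min_le_right _ _)) hκ.le

lemma psi_monotone (hδ : 0 < δ) (hκ : 0 < κ) : Monotone (psi δ κ) := fun x y hxy => by
  rw [psi_eq_clamp_rpow hδ hκ, psi_eq_clamp_rpow hδ hκ]
  gcongr

lemma continuous_psi (hδ : 0 < δ) (hκ : 0 < κ) : Continuous (psi δ κ) := by
  rw [funext (psi_eq_clamp_rpow hδ hκ)]
  exact (continuous_rpow_const hκ.le).comp (by fun_prop)

lemma abs_psi_sub_psi_le (hδ : 0 < δ) (hκ0 : 0 < κ) (hκ1 : κ ≤ 1) (x y : ℝ) :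
    |psi δ κ x - psi δ κ y| ≤ (|x - y| / δ) ^ κ := by
  rw [psi_eq_clamp_rpow hδ hκ0, psi_eq_clamp_rpow hδ hκ0]
  refine (abs_rpow_sub_rpow_le (by positivity) (by positivity) hκ0.le hκ1).trans ?_
  have hclamp : |min (max x 0) δ - min (max y 0) δ| ≤ |x - y| :=
    calc |min (max x 0) δ - min (max y 0) δ| ≤ max |max x 0 - max y 0| |δ - δ| :=
          abs_min_sub_min_le_max _ _ _ _
      _ = |max x 0 - max y 0| := by simp
      _ ≤ |x - y| := abs_max_sub_max_le_abs _ _ _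
  rw [← sub_div, abs_div, abs_of_pos hδ]
  gcongr

end Psi

/-- The Kullback–Leibler divergence of `Poisson(y)` from `Poisson(x)`. -/
noncomputable def poissonKL (x y : ℝ) : ℝ := (x / y - 1 - log (x / y)) * y

lemma poissonKL_nonneg {x y : ℝ} (hx : 0 < x) (hy : 0 < y) : 0 ≤ poissonKL x y :=
  mul_nonneg (by linarith [log_le_sub_one_of_pos (div_pos hx hy)]) hy.le

lemma poissonKL_le {x y : ℝ} (hx : 0 < x) (hy : 0 < y) : poissonKL x y ≤ (x - y) ^ 2 / x := by
  have hlog : log (y / x) ≤ y / x - 1 := log_le_sub_one_of_pos (div_pos hy hx)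
  have hkl : poissonKL x y = x - y + y * log (y / x) := by
    rw [poissonKL, log_div hx.ne' hy.ne', log_div hy.ne' hx.ne']
    field_simp
    ring
  have hsq : (x - y) ^ 2 / x = x - y + y * (y / x - 1) := by
    field_simp
    ring
  rw [hkl, hsq]
  gcongr

lemma Continuous.poissonKL {α : Type*} [TopologicalSpace α] {f g : α → ℝ} (hf : Continuous f)
    (hg : Continuous g) (hf0 : ∀ t, f t ≠ 0) (hg0 : ∀ t, g t ≠ 0) :
    Continuous fun t => poissonKL (f t) (g t) := by
  have hfg : Continuous fun t => f t / g t := hf.div hg hg0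
  exact ((hfg.sub continuous_const).sub (hfg.log fun t => div_ne_zero (hf0 t) (hg0 t))).mul hg

/-- `biasFun S lam0 1` is the constant `A` of the theorem. -/
noncomputable def biasFun (S lam0 y : ℝ) : ℝ := y - lam0 / S * log (1 + S * y / lam0)

section BiasFun

variable {S lam0 : ℝ}

@[simp]
lemma biasFun_zero : biasFun S lam0 0 = 0 := by simp [biasFun]

lemma biasFun_one : biasFun S lam0 1 = 1 - lam0 / S * log (1 + S / lam0) := by simp [biasFun]

lemma biasFun_pos (hS : 0 < S) (hlam0 : 0 < lam0) {y : ℝ} (hy : 0 < y) : 0 < biasFun S lam0 y := by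
  have hx : 0 < S * y / lam0 := by positivity
  have hlog : log (1 + S * y / lam0) < S * y / lam0 := by
    linarith [log_lt_sub_one_of_pos (by linarith : 0 < 1 + S * y / lam0) (by linarith)]
  have hmul := mul_lt_mul_of_pos_left hlog (div_pos hlam0 hS)
  rw [biasFun, sub_pos]
  calc lam0 / S * log (1 + S * y / lam0) < lam0 / S * (S * y / lam0) := hmul
    _ = y := by field_simp

lemma hasDerivAt_biasFun (hS : 0 < S) (hlam0 : 0 < lam0) {y : ℝ} (hy : 0 ≤ y) :
    HasDerivAt (biasFun S lam0) (S * y / (S * y + lam0)) y := by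
  have harg : 0 < 1 + S * y / lam0 := by positivity
  have hlog := ((((hasDerivAt_id' y).const_mul S).div_const lam0).const_add 1).log harg.ne'
  refine ((hasDerivAt_id' y).sub (hlog.const_mul (lam0 / S))).congr_deriv ?_
  field_simp
  ring

lemma continuousOn_biasFun (hS : 0 < S) (hlam0 : 0 < lam0) :
    ContinuousOn (biasFun S lam0) (Ici 0) :=
  fun _ hy => (hasDerivAt_biasFun hS hlam0 hy).continuousAt.continuousWithinAt

lemma continuous_biasFun_psi (hS : 0 < S) (hlam0 : 0 < lam0) {δ κ : ℝ} (hδ : 0 < δ)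
    (hκ : 0 < κ) : Continuous fun x => biasFun S lam0 (psi δ κ x) :=
  (continuousOn_biasFun hS hlam0).comp_continuous (continuous_psi hδ hκ) (psi_nonneg hδ hκ)

lemma integral_rpow_mul_div_eq_biasFun (hS : 0 < S) (hlam0 : 0 < lam0) {κ : ℝ} (hκ : 0 < κ)
    (h : ℝ) :
    ∫ x in (0 : ℝ)..1, S * κ * x ^ (κ - 1) * (h * x ^ κ) / (S * x ^ κ + lam0) =
      h * biasFun S lam0 1 := by
  have hderiv : ∀ x ∈ Ioo (0 : ℝ) 1, HasDerivAt (fun x => biasFun S lam0 (x ^ κ))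
      (κ * x ^ (κ - 1) * (S * x ^ κ / (S * x ^ κ + lam0))) x := fun x hx => by
    refine ((hasDerivAt_biasFun hS hlam0 (rpow_nonneg hx.1.le κ)).comp x
      (hasDerivAt_rpow_const (Or.inl hx.1.ne'))).congr_deriv ?_
    ring
  have hcont : ContinuousOn (fun x => biasFun S lam0 (x ^ κ)) (Icc 0 1) :=
    (continuousOn_biasFun hS hlam0).comp (continuous_rpow_const hκ.le).continuousOn
      fun x hx => rpow_nonneg hx.1 κ
  have hderiv_nonneg : ∀ x ∈ Ioo (0 : ℝ) 1,
      0 ≤ κ * x ^ (κ - 1) * (S * x ^ κ / (S * x ^ κ + lam0)) := fun x hx => by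
    have := hx.1
    positivity
  have hint := intervalIntegral.integrableOn_deriv_of_nonneg hcont hderiv hderiv_nonneg
  calc _ = h * ∫ x in (0 : ℝ)..1, κ * x ^ (κ - 1) * (S * x ^ κ / (S * x ^ κ + lam0)) := by
        rw [← intervalIntegral.integral_const_mul]
        congr 1 with x
        ring
    _ = h * biasFun S lam0 1 := by
        rw [intervalIntegral.integral_eq_sub_of_hasDerivAt_of_le zero_le_one hcont hderiv
          ((intervalIntegrable_iff_integrableOn_Ioc_of_le zero_le_one).2 hint)]
        simp [zero_rpow hκ.ne']

lemma poissonKL_sub_poissonKL (hS : 0 < S) (hlam0 : 0 < lam0) {h p q : ℝ} (hSh : 0 ≤ S + h)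
    (hp : 0 ≤ p) (hq : 0 ≤ q) :
    poissonKL (S * p + lam0) ((S + h) * q + lam0) - poissonKL (S * q + lam0) ((S + h) * q + lam0) =
      h * (biasFun S lam0 q - biasFun S lam0 p) +
        (S + h) / S * poissonKL (S * p + lam0) (S * q + lam0) := by
  have hx : 0 < S * p + lam0 := by positivity
  have hy : 0 < S * q + lam0 := by positivity
  have hz : 0 < (S + h) * q + lam0 := by positivity
  have hlog : ∀ r, 0 ≤ r → log (1 + S * r / lam0) = log (S * r + lam0) - log lam0 := fun r hr => by
    rw [← log_div (by positivity) hlam0.ne']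
    congr 1
    field_simp
    ring
  simp only [poissonKL, biasFun, hlog p hp, hlog q hq, log_div hx.ne' hz.ne', log_div hy.ne' hz.ne',
    log_div hx.ne' hy.ne']
  field_simp
  ring

end BiasFun

noncomputable def shiftIntegral (S lam0 δ κ τ ϑ₀ ϑ : ℝ) : ℝ :=
  ∫ t in ϑ₀..τ, biasFun S lam0 (psi δ κ (t - ϑ))

/-- For `t ≤ ϑ₀` the real intensity equals `lamT S lam0 δ κ ϑ₀ t = λ₀`, so the part of `J(ϑ)`
below `ϑ₀` is a divergence between theoretical intensities too. -/
noncomputable def klRemainder (S h lam0 δ κ τ ϑ₀ ϑ : ℝ) : ℝ :=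
  (∫ t in min ϑ ϑ₀..ϑ₀, poissonKL (lamT S lam0 δ κ ϑ t) (lamT S lam0 δ κ ϑ₀ t)) +
    (S + h) / S * ∫ t in ϑ₀..τ, poissonKL (lamT S lam0 δ κ ϑ t) (lamT S lam0 δ κ ϑ₀ t)

section Model

variable {S h lam0 δ κ τ ϑ₀ : ℝ}

lemma lamT_pos (hS : 0 ≤ S) (hlam0 : 0 < lam0) (hδ : 0 < δ) (hκ : 0 < κ) (ϑ t : ℝ) :
    0 < lamT S lam0 δ κ ϑ t :=
  add_pos_of_nonneg_of_pos (mul_nonneg hS (psi_nonneg hδ hκ _)) hlam0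

lemma lamR_pos (hSh : 0 ≤ S + h) (hlam0 : 0 < lam0) (hδ : 0 < δ) (hκ : 0 < κ) (ϑ₀ t : ℝ) :
    0 < lamR S h lam0 δ κ ϑ₀ t :=
  add_pos_of_nonneg_of_pos (mul_nonneg hSh (psi_nonneg hδ hκ _)) hlam0

lemma continuous_lamT (hδ : 0 < δ) (hκ : 0 < κ) (ϑ : ℝ) : Continuous (lamT S lam0 δ κ ϑ) :=
  (continuous_const.mul ((continuous_psi hδ hκ).comp (continuous_sub_right ϑ))).add
    continuous_const

lemma continuous_lamR (hδ : 0 < δ) (hκ : 0 < κ) (ϑ₀ : ℝ) : Continuous (lamR S h lam0 δ κ ϑ₀) :=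
  (continuous_const.mul ((continuous_psi hδ hκ).comp (continuous_sub_right ϑ₀))).add
    continuous_const

lemma continuous_poissonKL_lamT_lamT (hS : 0 ≤ S) (hlam0 : 0 < lam0) (hδ : 0 < δ) (hκ : 0 < κ)
    (ϑ ϑ' : ℝ) : Continuous fun t => poissonKL (lamT S lam0 δ κ ϑ t) (lamT S lam0 δ κ ϑ' t) :=
  (continuous_lamT hδ hκ ϑ).poissonKL (continuous_lamT hδ hκ ϑ')
    (fun t => (lamT_pos hS hlam0 hδ hκ ϑ t).ne') (fun t => (lamT_pos hS hlam0 hδ hκ ϑ' t).ne')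

lemma continuous_poissonKL_lamT_lamR (hS : 0 ≤ S) (hSh : 0 ≤ S + h) (hlam0 : 0 < lam0)
    (hδ : 0 < δ) (hκ : 0 < κ) (ϑ ϑ₀ : ℝ) :
    Continuous fun t => poissonKL (lamT S lam0 δ κ ϑ t) (lamR S h lam0 δ κ ϑ₀ t) :=
  (continuous_lamT hδ hκ ϑ).poissonKL (continuous_lamR hδ hκ ϑ₀)
    (fun t => (lamT_pos hS hlam0 hδ hκ ϑ t).ne') (fun t => (lamR_pos hSh hlam0 hδ hκ ϑ₀ t).ne')

lemma JKL_eq_shiftIntegral_add_klRemainder (hS : 0 < S) (hlam0 : 0 < lam0) (hδ : 0 < δ)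
    (hκ : 0 < κ) (hSh : 0 ≤ S + h) (ϑ : ℝ) :
    JKL S h lam0 δ κ τ ϑ₀ ϑ = JKL S h lam0 δ κ τ ϑ₀ ϑ₀ +
      h * (shiftIntegral S lam0 δ κ τ ϑ₀ ϑ₀ - shiftIntegral S lam0 δ κ τ ϑ₀ ϑ) +
        klRemainder S h lam0 δ κ τ ϑ₀ ϑ := by
  have hIR : ∀ ϑ' a b, IntervalIntegrable
      (fun t => poissonKL (lamT S lam0 δ κ ϑ' t) (lamR S h lam0 δ κ ϑ₀ t)) volume a b :=
    fun ϑ' _ _ =>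
      (continuous_poissonKL_lamT_lamR hS.le hSh hlam0 hδ hκ ϑ' ϑ₀).intervalIntegrable _ _
  have hIT := (continuous_poissonKL_lamT_lamT hS.le hlam0 hδ hκ ϑ ϑ₀).intervalIntegrable
    (μ := volume) ϑ₀ τ
  have hIG : ∀ ϑ', IntervalIntegrable (fun t => biasFun S lam0 (psi δ κ (t - ϑ'))) volume ϑ₀ τ :=
    fun ϑ' => ((continuous_biasFun_psi hS hlam0 hδ hκ).comp
      (continuous_sub_right ϑ')).intervalIntegrable _ _
  have hbefore : ∫ t in min ϑ ϑ₀..ϑ₀, poissonKL (lamT S lam0 δ κ ϑ t) (lamR S h lam0 δ κ ϑ₀ t) =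
      ∫ t in min ϑ ϑ₀..ϑ₀, poissonKL (lamT S lam0 δ κ ϑ t) (lamT S lam0 δ κ ϑ₀ t) :=
    intervalIntegral.integral_congr fun t ht => by
      have hq : psi δ κ (t - ϑ₀) = 0 := psi_of_nonpos hδ (by
        have := ht.2
        rw [max_eq_right (min_le_right ϑ ϑ₀)] at this
        linarith)
      simp only [lamT, lamR, hq, mul_zero]
  have hafter : (∫ t in ϑ₀..τ, poissonKL (lamT S lam0 δ κ ϑ t) (lamR S h lam0 δ κ ϑ₀ t)) -
      ∫ t in ϑ₀..τ, poissonKL (lamT S lam0 δ κ ϑ₀ t) (lamR S h lam0 δ κ ϑ₀ t) =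
      h * (shiftIntegral S lam0 δ κ τ ϑ₀ ϑ₀ - shiftIntegral S lam0 δ κ τ ϑ₀ ϑ) +
        (S + h) / S * ∫ t in ϑ₀..τ, poissonKL (lamT S lam0 δ κ ϑ t) (lamT S lam0 δ κ ϑ₀ t) := by
    rw [shiftIntegral, shiftIntegral, ← intervalIntegral.integral_sub (hIR _ _ _) (hIR _ _ _),
      ← intervalIntegral.integral_sub (hIG _) (hIG _), ← intervalIntegral.integral_const_mul,
      ← intervalIntegral.integral_const_mul, ← intervalIntegral.integral_add
        ((hIG _).sub (hIG _) |>.const_mul h) (hIT.const_mul _)]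
    exact intervalIntegral.integral_congr fun t _ =>
      poissonKL_sub_poissonKL hS hlam0 hSh (psi_nonneg hδ hκ _) (psi_nonneg hδ hκ _)
  have hsplit := intervalIntegral.integral_add_adjacent_intervals (hIR ϑ (min ϑ ϑ₀) ϑ₀)
    (hIR ϑ ϑ₀ τ)
  have hJ : ∀ ϑ', JKL S h lam0 δ κ τ ϑ₀ ϑ' =
      ∫ t in min ϑ' ϑ₀..τ, poissonKL (lamT S lam0 δ κ ϑ' t) (lamR S h lam0 δ κ ϑ₀ t) :=
    fun _ => rfl
  rw [hJ, hJ, min_self, ← hsplit, hbefore, klRemainder]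
  linarith

lemma poissonKL_lamT_le (hS : 0 < S) (hlam0 : 0 < lam0) (hδ : 0 < δ) (hκ0 : 0 < κ) (hκ1 : κ ≤ 1)
    (ϑ ϑ₀ t : ℝ) :
    poissonKL (lamT S lam0 δ κ ϑ t) (lamT S lam0 δ κ ϑ₀ t) ≤
      S ^ 2 / lam0 * (|ϑ - ϑ₀| / δ) ^ κ * |psi δ κ (t - ϑ) - psi δ κ (t - ϑ₀)| := by
  have hHolder := abs_psi_sub_psi_le hδ hκ0 hκ1 (t - ϑ) (t - ϑ₀)
  rw [sub_sub_sub_cancel_left, abs_sub_comm ϑ₀] at hHolder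
  have hp := psi_nonneg hδ hκ0 (t - ϑ)
  have hT := lamT_pos hS.le hlam0 hδ hκ0 (S := S)
  set d := psi δ κ (t - ϑ) - psi δ κ (t - ϑ₀)
  calc poissonKL (lamT S lam0 δ κ ϑ t) (lamT S lam0 δ κ ϑ₀ t)
      ≤ (lamT S lam0 δ κ ϑ t - lamT S lam0 δ κ ϑ₀ t) ^ 2 / lamT S lam0 δ κ ϑ t :=
        poissonKL_le (hT ϑ t) (hT ϑ₀ t)
    _ ≤ (S * d) ^ 2 / lam0 := by
        rw [show lamT S lam0 δ κ ϑ t - lamT S lam0 δ κ ϑ₀ t = S * d by simp only [lamT, d]; ring]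
        gcongr
        exact le_add_of_nonneg_left (mul_nonneg hS.le hp)
    _ = S ^ 2 / lam0 * |d| * |d| := by rw [mul_assoc, abs_mul_abs_self]; ring
    _ ≤ S ^ 2 / lam0 * (|ϑ - ϑ₀| / δ) ^ κ * |d| := by gcongr

lemma integral_poissonKL_lamT_le (hS : 0 < S) (hlam0 : 0 < lam0) (hδ : 0 < δ) (hκ0 : 0 < κ)
    (hκ1 : κ ≤ 1) {a b : ℝ} (hab : a ≤ b) (ϑ ϑ₀ : ℝ) :
    ∫ t in a..b, poissonKL (lamT S lam0 δ κ ϑ t) (lamT S lam0 δ κ ϑ₀ t) ≤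
      2 * S ^ 2 / lam0 * (|ϑ - ϑ₀| / δ) ^ κ * |ϑ - ϑ₀| := by
  have hpsi : ∀ ϑ', Continuous fun t => psi δ κ (t - ϑ') :=
    fun ϑ' => (continuous_psi hδ hκ0).comp (continuous_sub_right ϑ')
  calc _ ≤ ∫ t in a..b,
        S ^ 2 / lam0 * (|ϑ - ϑ₀| / δ) ^ κ * |psi δ κ (t - ϑ) - psi δ κ (t - ϑ₀)| :=
        intervalIntegral.integral_mono_on hab
          ((continuous_poissonKL_lamT_lamT hS.le hlam0 hδ hκ0 ϑ ϑ₀).intervalIntegrable _ _)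
          ((continuous_const.mul ((hpsi ϑ).sub (hpsi ϑ₀)).abs).intervalIntegrable _ _)
          fun t _ => poissonKL_lamT_le hS hlam0 hδ hκ0 hκ1 ϑ ϑ₀ t
    _ ≤ S ^ 2 / lam0 * (|ϑ - ϑ₀| / δ) ^ κ * (2 * |ϑ - ϑ₀|) := by
        rw [intervalIntegral.integral_const_mul]
        gcongr
        exact integral_abs_sub_comp_sub_le (continuous_psi hδ hκ0) (psi_monotone hδ hκ0)
          (psi_nonneg hδ hκ0) (psi_le_one hδ hκ0) a b ϑ ϑ₀
    _ = _ := by ring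

lemma abs_klRemainder_le (hS : 0 < S) (hlam0 : 0 < lam0) (hδ : 0 < δ) (hκ0 : 0 < κ)
    (hκ1 : κ ≤ 1) (hSh : 0 ≤ S + h) (hτ : ϑ₀ ≤ τ) (ϑ : ℝ) :
    |klRemainder S h lam0 δ κ τ ϑ₀ ϑ| ≤
      (1 + (S + h) / S) * (2 * S ^ 2 / lam0) * (|ϑ - ϑ₀| / δ) ^ κ * |ϑ - ϑ₀| := by
  have hT := lamT_pos hS.le hlam0 hδ hκ0 (S := S)
  have hnonneg : ∀ {a b : ℝ}, a ≤ b →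
      0 ≤ ∫ t in a..b, poissonKL (lamT S lam0 δ κ ϑ t) (lamT S lam0 δ κ ϑ₀ t) :=
    fun hab => intervalIntegral.integral_nonneg hab fun t _ => poissonKL_nonneg (hT ϑ t) (hT ϑ₀ t)
  have hc : 0 ≤ (S + h) / S := div_nonneg hSh hS.le
  have hbefore := integral_poissonKL_lamT_le hS hlam0 hδ hκ0 hκ1 (min_le_right ϑ ϑ₀) ϑ ϑ₀
  have hafter := mul_le_mul_of_nonneg_left
    (integral_poissonKL_lamT_le hS hlam0 hδ hκ0 hκ1 hτ ϑ ϑ₀) hc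
  rw [klRemainder, abs_of_nonneg
    (add_nonneg (hnonneg (min_le_right ϑ ϑ₀)) (mul_nonneg hc (hnonneg hτ)))]
  linarith

lemma hasDerivAt_klRemainder (hS : 0 < S) (hlam0 : 0 < lam0) (hδ : 0 < δ) (hκ0 : 0 < κ)
    (hκ1 : κ ≤ 1) (hSh : 0 ≤ S + h) (hτ : ϑ₀ ≤ τ) :
    HasDerivAt (klRemainder S h lam0 δ κ τ ϑ₀) 0 ϑ₀ := by
  have hcont : Continuous fun ϑ => (1 + (S + h) / S) * (2 * S ^ 2 / lam0) * (|ϑ - ϑ₀| / δ) ^ κ :=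
    continuous_const.mul ((continuous_rpow_const hκ0.le).comp (by fun_prop))
  have hε := hcont.tendsto ϑ₀
  rw [sub_self, abs_zero, zero_div, zero_rpow hκ0.ne', mul_zero] at hε
  exact hasDerivAt_zero_of_abs_le hε
    (Eventually.of_forall (abs_klRemainder_le hS hlam0 hδ hκ0 hκ1 hSh hτ))

lemma hasDerivAt_shiftIntegral (hS : 0 < S) (hlam0 : 0 < lam0) (hδ : 0 < δ) (hκ : 0 < κ)
    (hδτ : δ ≤ τ - ϑ₀) : HasDerivAt (shiftIntegral S lam0 δ κ τ ϑ₀) (-biasFun S lam0 1) ϑ₀ := by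
  have := hasDerivAt_integral_comp_sub (continuous_biasFun_psi hS hlam0 hδ hκ) ϑ₀ τ ϑ₀
  rwa [sub_self, psi_of_nonpos hδ le_rfl, psi_of_le hδτ, biasFun_zero, zero_sub] at this

theorem hasDerivAt_JKL (hS : 0 < S) (hlam0 : 0 < lam0) (hδ : 0 < δ) (hκ0 : 0 < κ) (hκ1 : κ ≤ 1)
    (hSh : 0 ≤ S + h) (hδτ : δ ≤ τ - ϑ₀) :
    HasDerivAt (JKL S h lam0 δ κ τ ϑ₀) (biasFun S lam0 1 * h) ϑ₀ := by
  rw [funext (JKL_eq_shiftIntegral_add_klRemainder hS hlam0 hδ hκ0 hSh)]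
  exact ((((hasDerivAt_shiftIntegral hS hlam0 hδ hκ0 hδτ).const_sub _).const_mul h).const_add _
    |>.add (hasDerivAt_klRemainder hS hlam0 hδ hκ0 hκ1 hSh (by linarith))).congr_deriv (by ring)

end Model

lemma add_pos_of_div_log_sub_lt {S lam0 h : ℝ} (hS : 0 < S) (hlam0 : 0 < lam0)
    (hH : S / log (1 + S / lam0) - S - lam0 < h) : 0 < S + h := by
  have hlog : 0 < log (1 + S / lam0) := log_pos (by linarith [div_pos hS hlam0])
  have hA := biasFun_pos hS hlam0 one_pos
  rw [biasFun_one] at hA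
  have hdiff : S / log (1 + S / lam0) - lam0 =
      S * (1 - lam0 / S * log (1 + S / lam0)) / log (1 + S / lam0) := by
    rw [eq_div_iff hlog.ne', sub_mul, div_mul_cancel₀ _ hlog.ne']
    field_simp
  have : 0 < S / log (1 + S / lam0) - lam0 := by
    rw [hdiff]
    positivity
  linarith

theorem stmt_4_general (S lam0 δ τ κ α β ϑ₀ h : ℝ)
    (hS : 0 < S) (hlam0 : 0 < lam0) (hδ : 0 < δ)
    (hκ : κ ∈ Set.Ioo (0 : ℝ) (1 / 2))
    (hΘ : Set.Ioo (α - δ) (β + δ) ⊆ Set.Ioo 0 (τ - δ))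
    (hϑ₀ : ϑ₀ ∈ Set.Ioo α β)
    (hH : S / Real.log (1 + S / lam0) - S - lam0 < h) :
    HasDerivAt (JKL S h lam0 δ κ τ ϑ₀)
        ((1 - (lam0 / S) * Real.log (1 + S / lam0)) * h) ϑ₀ ∧
      0 < 1 - (lam0 / S) * Real.log (1 + S / lam0) ∧
      (∫ x in (0 : ℝ)..1, S * κ * x ^ (κ - 1) * (h * x ^ κ) / (S * x ^ κ + lam0)) =
        h * (1 - (lam0 / S) * Real.log (1 + S / lam0)) := by
  obtain ⟨hκ0, hκ_half⟩ := hκ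
  have hδτ : δ ≤ τ - ϑ₀ := by
    have := (hΘ (show ϑ₀ ∈ Ioo (α - δ) (β + δ) from
      ⟨by linarith [hϑ₀.1], by linarith [hϑ₀.2]⟩)).2
    linarith
  have hSh : 0 < S + h := add_pos_of_div_log_sub_lt hS hlam0 hH
  rw [← biasFun_one]
  exact ⟨hasDerivAt_JKL hS hlam0 hδ hκ0 (by linarith) hSh.le hδτ, biasFun_pos hS hlam0 one_pos,
    integral_rpow_mul_div_eq_biasFun hS hlam0 hκ0 h⟩

theorem stmt_4 (S lam0 δ τ κ α β ϑ₀ h : ℝ)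
    (hS : 0 < S) (hlam0 : 0 < lam0) (hδ : 0 < δ) (hτ : 0 < τ)
    (hκ : κ ∈ Set.Ioo (0 : ℝ) (1 / 2)) (hαβ : α < β)
    (hΘ : Set.Ioo (α - δ) (β + δ) ⊆ Set.Ioo 0 (τ - δ))
    (hϑ₀ : ϑ₀ ∈ Set.Ioo α β)
    (hH : S / Real.log (1 + S / lam0) - S - lam0 < h) :
    HasDerivAt (JKL S h lam0 δ κ τ ϑ₀)
        ((1 - (lam0 / S) * Real.log (1 + S / lam0)) * h) ϑ₀ ∧
      0 < 1 - (lam0 / S) * Real.log (1 + S / lam0) ∧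
      (∫ x in (0 : ℝ)..1, S * κ * x ^ (κ - 1) * (h * x ^ κ) / (S * x ^ κ + lam0)) =
        h * (1 - (lam0 / S) * Real.log (1 + S / lam0)) :=
  stmt_4_general S lam0 δ τ κ α β ϑ₀ h hS hlam0 hδ hκ hΘ hϑ₀ hH
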